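/- arXiv:math/9411239 — 4 statements merged into one kernel-verified Lean document; each statement's English description precedes it below -/
import Mathlib

section
/- Let K : ℂ^{a+b} → ℂ^{a+b} be the linear map with K(e_n) = i^{a+b−1} · e_{a+b+1−n} for 1 ≤ n ≤ a+b (i a fixed square root of −1 in ℂ). Then the induced map Λ^a K on Λ^a ℂ^{a+b} satisfies (Λ^a K)(x_P) = i^{ab} · x_{κ(P)} for every partition P in the a×b rectangle. -/
open Finset

/-- A partition in an `a × b` rectangle, given by its weakly decreasing sequence of
row lengths `λ₁ ≥ λ₂ ≥ ⋯ ≥ λ_a` with `0 ≤ λᵢ ≤ b` (zero-based indexing). -/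
def IsRect (a b : ℕ) (lam : Fin a → ℕ) : Prop :=
  Antitone lam ∧ ∀ i, lam i ≤ b

/-- The down-step set `S(P) = {λᵢ + a + 1 - i : 1 ≤ i ≤ a} ⊆ {1, …, a+b}`
(the zero-based row `i : Fin a` contributes `λ_{i+1} + a + 1 - (i+1) = lam i + a - i`). -/
def downSteps (a : ℕ) (lam : Fin a → ℕ) : Finset ℕ :=
  Finset.univ.image fun i : Fin a => lam i + a - (i : ℕ)

/-- Complementation of a partition with `a` rows in a rectangle of width `m`:
the row lengths are `(m - λ_{a+1-i})_{i=1}^{a}`. -/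
def seqKappa (a m : ℕ) (lam : Fin a → ℕ) : Fin a → ℕ := fun i => m - lam i.rev

/-- Transposition of a partition in an `a × b` rectangle: `τ(λ)_j = #{i : λᵢ ≥ j}`
(zero-based: `τ(λ) j = #{i : lam i > j}`), a partition in the `b × a` rectangle. -/
def seqTau (a b : ℕ) (lam : Fin a → ℕ) : Fin b → ℕ :=
  fun j => (Finset.univ.filter fun i : Fin a => (j : ℕ) < lam i).card

/-- The standard basis vector `e_n` (one-based `n`) of `ℂ^d`. -/
def eb (d n : ℕ) : Fin d → ℂ := fun m => if (m : ℕ) + 1 = n then 1 else 0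

/-- The increasing enumeration `s₁ < s₂ < ⋯ < s_a` of the down-step set `S(P)`
(zero-based: `k ↦ s_{k+1}`); for an antitone `lam` the map
`i ↦ lam i + a - i` is strictly decreasing, so we reverse the index. -/
def sInc (a : ℕ) (lam : Fin a → ℕ) : Fin a → ℕ :=
  fun k => lam k.rev + a - (k.rev : ℕ)

/-- The wedge `x_P = e_{s₁} ∧ ⋯ ∧ e_{s_a} ∈ Λ^a ℂ^d` for `S(P) = {s₁ < ⋯ < s_a}`. -/
noncomputable def xWedge (d a : ℕ) (lam : Fin a → ℕ) :
    ExteriorAlgebra ℂ (Fin d → ℂ) :=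
  ExteriorAlgebra.ιMulti ℂ a fun k => eb d (sInc a lam k)

/-- The linear map `K : ℂ^d → ℂ^d`, `K(e_n) = i^{d-1} e_{d+1-n}`. -/
noncomputable def mapK (d : ℕ) : (Fin d → ℂ) →ₗ[ℂ] (Fin d → ℂ) :=
  Complex.I ^ (d - 1) • LinearMap.funLeft ℂ ℂ Fin.rev

section Aux

open ExteriorAlgebra

variable {M : Type*} [AddCommGroup M] [Module ℂ M]

lemma prod_mul_iota (l : List M) (x : M) :
    (l.map (ι ℂ)).prod * ι ℂ x = ((-1 : ℂ) ^ l.length) • (ι ℂ x * (l.map (ι ℂ)).prod) := by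
  induction l with
  | nil => simp
  | cons y l ih =>
    have hxy : ι ℂ y * ι ℂ x = -(ι ℂ x * ι ℂ y) :=
      eq_neg_of_add_eq_zero_left (ExteriorAlgebra.ι_add_mul_swap (R := ℂ) y x)
    simp only [List.map_cons, List.prod_cons, List.length_cons, mul_assoc, ih,
      mul_smul_comm, pow_succ]
    rw [← mul_assoc, hxy]
    simp [mul_smul, mul_assoc]

lemma reverse_iota_prod (l : List M) :
    ((l.map (ι ℂ)).reverse).prod = ((-1 : ℂ) ^ (l.length.choose 2)) • (l.map (ι ℂ)).prod := by
  induction l with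
  | nil => simp
  | cons y l ih =>
    simp only [List.map_cons, List.reverse_cons, List.prod_append, List.prod_cons,
      List.prod_nil, mul_one, ih, List.length_cons, smul_mul_assoc, prod_mul_iota]
    rw [smul_smul, ← pow_add, Nat.choose_succ_succ, Nat.choose_one_right, Nat.add_comm]

lemma two_mul_choose_two (a : ℕ) : 2 * a.choose 2 = a * (a - 1) := by
  induction a with
  | zero => simp
  | succ n ih =>
    rw [Nat.choose_succ_succ, Nat.choose_one_right, Nat.mul_add, ih, Nat.succ_sub_one]
    cases n with
    | zero => simp
    | succ m => rw [Nat.succ_sub_one]; ring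

lemma scalar_eq (a b : ℕ) :
    (Complex.I ^ (a + b - 1)) ^ a * (-1 : ℂ) ^ (a.choose 2) = Complex.I ^ (a * b) := by
  have h1 : (-1 : ℂ) = Complex.I ^ 2 := Complex.I_sq.symm
  rw [h1, ← pow_mul, ← pow_mul, ← pow_add]
  have he : (a + b - 1) * a + 2 * a.choose 2 = a * b + 4 * a.choose 2 := by
    have h2 := two_mul_choose_two a
    have h4 : 4 * a.choose 2 = 2 * (a * (a - 1)) := by omega
    rw [h4, h2]
    cases a with
    | zero => simp
    | succ n => simp [Nat.succ_sub_one, Nat.add_sub_cancel]; ring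
  rw [he, pow_add, pow_mul Complex.I 4, Complex.I_pow_four, one_pow, mul_one]

lemma ofFn_rev' {n : ℕ} {α : Type*} (f : Fin n → α) :
    (List.ofFn fun i => f i.rev) = (List.ofFn f).reverse := by
  apply List.ext_getElem
  · simp
  · intro i h1 h2
    simp only [List.getElem_ofFn, List.getElem_reverse, List.length_ofFn] at *
    congr 1
    ext
    simp only [Fin.val_rev]
    omega

lemma iotaMulti_rev {n d : ℕ} (g : Fin n → (Fin d → ℂ)) :
    ExteriorAlgebra.ιMulti ℂ n (fun k => g k.rev)
      = ((-1 : ℂ) ^ (n.choose 2)) • ExteriorAlgebra.ιMulti ℂ n g := by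
  rw [ExteriorAlgebra.ιMulti_apply, ExteriorAlgebra.ιMulti_apply]
  have h1 : (List.ofFn fun i : Fin n => ι ℂ (g i.rev))
      = ((List.ofFn g).map (ι ℂ)).reverse := by
    rw [List.map_ofFn, ← ofFn_rev' (⇑(ι ℂ) ∘ g)]
    simp [Function.comp_def]
  rw [h1, reverse_iota_prod]
  simp [List.map_ofFn, Function.comp_def]

end Aux

/-- The induced map `Λ^a K` sends the basis vector `x_P` to `i^{ab} x_{κ(P)}`. -/
theorem wedge_K_complement (a b : ℕ) (lam : Fin a → ℕ) (h : IsRect a b lam) :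
    ExteriorAlgebra.map (mapK (a + b)) (xWedge (a + b) a lam) =
      Complex.I ^ (a * b) • xWedge (a + b) a (seqKappa a b lam) := by
  obtain ⟨hmono, hle⟩ := h
  have ebrev : ∀ k : Fin a, (eb (a + b) (sInc a lam k)) ∘ Fin.rev
      = eb (a + b) (sInc a (seqKappa a b lam) k.rev) := by
    intro k
    funext m
    have hk : (k : ℕ) < a := k.isLt
    have hm : (m : ℕ) < a + b := m.isLt
    have hL : lam k.rev ≤ b := hle k.rev
    simp only [Function.comp_apply, eb, sInc, seqKappa, Fin.rev_rev, Fin.val_rev]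
    exact if_congr (by omega) rfl rfl
  have hcomp : (mapK (a + b)) ∘ (fun k : Fin a => eb (a + b) (sInc a lam k))
      = fun k => (Complex.I ^ (a + b - 1)) •
          eb (a + b) (sInc a (seqKappa a b lam) k.rev) := by
    funext k
    simp only [Function.comp_apply, mapK, LinearMap.smul_apply, LinearMap.funLeft_apply]
    rw [← ebrev k]
    rfl
  rw [xWedge, ExteriorAlgebra.map_apply_ιMulti, hcomp]
  have hsmul := MultilinearMap.map_smul_univ
      (ExteriorAlgebra.ιMulti ℂ a (M := Fin (a + b) → ℂ)).toMultilinearMap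
      (fun _ : Fin a => Complex.I ^ (a + b - 1))
      (fun k : Fin a => eb (a + b) (sInc a (seqKappa a b lam) k.rev))
  simp only [AlternatingMap.coe_multilinearMap, Finset.prod_const, Finset.card_univ,
    Fintype.card_fin] at hsmul
  have hrev := iotaMulti_rev (fun j : Fin a => eb (a + b) (sInc a (seqKappa a b lam) j))
  rw [hsmul, hrev, smul_smul, scalar_eq]
  rfl
end

section
/- Let P and P' be partitions in the a×a rectangle with increasing down-step enumerations s₁ < … < s_a and t₁ < … < t_a. Then the determinant of the a×a matrix with (i,j) entry B(e_{s_i}, e_{t_j}) equals (−1)^{|P|} if P' = κ(P), and equals 0 otherwise. -/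
open Finset

/-- The bilinear form `B` on `ℂ^{2a}` in coordinates (one-based indices):
`B(e_n, e_k) = (-1)^{n+1}` if `k = 2a+1-n` and `0` otherwise. -/
def Bform (a n k : ℕ) : ℂ := if n + k = 2 * a + 1 then (-1 : ℂ) ^ (n + 1) else 0

lemma sInc_eq (a : ℕ) (lam : Fin a → ℕ) (k : Fin a) :
    sInc a lam k = lam k.rev + (k : ℕ) + 1 := by
  unfold sInc
  have h1 : (k.rev : ℕ) = a - ((k : ℕ) + 1) := Fin.val_rev k
  have h2 := k.isLt
  omega

lemma sInc_strictMono {a : ℕ} {lam : Fin a → ℕ} (h : Antitone lam) :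
    StrictMono (sInc a lam) := by
  intro k l hkl
  rw [sInc_eq, sInc_eq]
  have h1 : lam k.rev ≤ lam l.rev := h (Fin.rev_le_rev.mpr hkl.le)
  have := hkl
  omega

lemma isRect_kappa {a : ℕ} {lam : Fin a → ℕ} (h : IsRect a a lam) :
    IsRect a a (seqKappa a a lam) := by
  constructor
  · intro i j hij
    exact Nat.sub_le_sub_left (h.1 (Fin.rev_le_rev.mpr hij)) a
  · intro i
    exact Nat.sub_le _ _

lemma sInc_kappa_add {a : ℕ} (lam : Fin a → ℕ) (hb : ∀ i, lam i ≤ a) (k : Fin a) :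
    sInc a lam k.rev + sInc a (seqKappa a a lam) k = 2 * a + 1 := by
  rw [sInc_eq, sInc_eq]
  simp only [seqKappa, Fin.rev_rev]
  have h1 : (k.rev : ℕ) = a - ((k : ℕ) + 1) := Fin.val_rev k
  have h2 := k.isLt
  have h3 := hb k
  omega

lemma eq_of_sInc_eq {a : ℕ} {mu nu : Fin a → ℕ} (h : sInc a mu = sInc a nu) : mu = nu := by
  funext i
  have h1 := congrFun h i.rev
  rw [sInc_eq, sInc_eq, Fin.rev_rev] at h1
  omega

lemma even_aux : ∀ a : ℕ, Even ((∑ i : Fin a, (i : ℕ)) + a / 2) := by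
  intro a
  induction a with
  | zero => simp
  | succ n ih =>
    rw [Fin.sum_univ_castSucc]
    simp only [Fin.coe_castSucc, Fin.val_last]
    rw [Nat.even_iff] at ih ⊢
    omega


lemma sign_revPerm : ∀ n : ℕ, Equiv.Perm.sign (Fin.revPerm : Equiv.Perm (Fin n)) = (-1 : ℤˣ) ^ (n / 2)
  | 0 => by decide
  | 1 => by decide
  | (n+2) => by
    classical
    set p : Fin (n+2) → Prop := fun x => (x : ℕ) ≠ 0 ∧ (x : ℕ) ≠ n + 1 with hpdef
    let e : Fin n ≃ {x : Fin (n+2) // p x} :=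
      { toFun := fun i => ⟨⟨(i : ℕ) + 1, by omega⟩, by
          constructor <;> simp <;> omega⟩
        invFun := fun x => ⟨(x : Fin (n+2)).val - 1, by
          have h2 := x.2
          have h3 := (x : Fin (n+2)).isLt
          simp only [hpdef] at h2
          omega⟩
        left_inv := fun i => by ext; simp
        right_inv := fun x => by
          have h2 := x.2
          simp only [hpdef] at h2
          ext
          simp
          omega }
    have key : (Fin.revPerm : Equiv.Perm (Fin (n+2))) =
        Equiv.swap 0 (Fin.last (n+1)) * (Fin.revPerm : Equiv.Perm (Fin n)).extendDomain e := by
      ext x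
      rw [Equiv.Perm.mul_apply]
      by_cases hp : p x
      · rw [Equiv.Perm.extendDomain_apply_subtype _ e hp]
        have hx1 : (x : ℕ) ≠ 0 := hp.1
        have hx2 : (x : ℕ) ≠ n + 1 := hp.2
        have hxlt := x.isLt
        have hval : ((e (Fin.revPerm (e.symm ⟨x, hp⟩)) : Fin (n+2)) : ℕ) = n + 1 - (x : ℕ) := by
          simp [e, Fin.val_rev]
          omega
        rw [Equiv.swap_apply_of_ne_of_ne]
        · rw [hval]
          simp only [Fin.revPerm_apply, Fin.val_rev]
          omega
        · intro hc
          have hc2 := congrArg Fin.val hc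
          rw [hval] at hc2
          simp at hc2
          omega
        · intro hc
          have hc2 := congrArg Fin.val hc
          rw [hval] at hc2
          simp [Fin.val_last] at hc2
          omega
      · rw [Equiv.Perm.extendDomain_apply_not_subtype _ e hp]
        simp only [hpdef, not_and_or, not_not] at hp
        rcases hp with hp | hp
        · have hx : x = 0 := by apply Fin.ext; simpa using hp
          subst hx
          rw [Equiv.swap_apply_left]
          simp [Fin.val_rev, Fin.val_last]
        · have hx : x = Fin.last (n+1) := by apply Fin.ext; simpa [Fin.val_last] using hp
          subst hx
          rw [Equiv.swap_apply_right]
          simp [Fin.val_rev, Fin.val_last]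
    rw [key, map_mul, Equiv.Perm.sign_swap, Equiv.Perm.sign_extendDomain, sign_revPerm n]
    · have h2 : (n + 2) / 2 = n / 2 + 1 := by omega
      rw [h2, pow_succ]
      exact mul_comm _ _
    · intro hc
      have := congrArg Fin.val hc
      simp [Fin.val_last] at this

/-- For partitions `P, P'` in the `a × a` square with increasing down-step
enumerations `s` and `t`, `det (B(e_{sᵢ}, e_{tⱼ}))_{ij} = (-1)^{|P|}` if `P' = κ(P)`
and `0` otherwise. -/
theorem det_Bform_downSteps (a : ℕ) (lam lam' : Fin a → ℕ)
    (h : IsRect a a lam) (h' : IsRect a a lam') :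
    (Matrix.of fun i j : Fin a => Bform a (sInc a lam i) (sInc a lam' j)).det =
      if lam' = seqKappa a a lam then (-1 : ℂ) ^ (∑ i, lam i) else 0 := by
  by_cases hk : lam' = seqKappa a a lam
  · subst hk
    rw [if_pos rfl]
    have hs := sInc_strictMono h.1
    have key : (Matrix.of fun i j : Fin a =>
          Bform a (sInc a lam i) (sInc a (seqKappa a a lam) j)) =
        Matrix.diagonal (fun i => (-1 : ℂ) ^ (sInc a lam i + 1)) *
          (Fin.revPerm : Equiv.Perm (Fin a)).permMatrix ℂ := by
      ext i j
      rw [Matrix.diagonal_mul, Matrix.of_apply]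
      have hsum := sInc_kappa_add lam h.2 j
      rw [Bform]
      have hiff : sInc a lam i + sInc a (seqKappa a a lam) j = 2 * a + 1 ↔ j = Fin.revPerm i := by
        constructor
        · intro hc
          have : sInc a lam i = sInc a lam j.rev := by omega
          have hij : i = j.rev := hs.injective this
          rw [hij]
          simp [Fin.rev_rev]
        · intro hc
          subst hc
          simpa [Fin.rev_rev] using sInc_kappa_add lam h.2 (Fin.revPerm i)
      rw [Equiv.Perm.permMatrix, PEquiv.toMatrix_apply, Equiv.toPEquiv_apply]
      by_cases hc : j = Fin.revPerm i
      · rw [if_pos (hiff.mpr hc)]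
        simp [hc]
      · rw [if_neg (fun hh => hc (hiff.mp hh))]
        simp only [Fin.revPerm_apply] at hc
        simp [Option.mem_def, eq_comm, hc]
    rw [key, Matrix.det_mul, Matrix.det_diagonal, Matrix.det_permutation, sign_revPerm a]
    rw [Finset.prod_pow_eq_pow_sum]
    have hexp : ∑ i : Fin a, (sInc a lam i + 1) =
        (∑ i, lam i) + ((∑ i : Fin a, (i : ℕ)) + 2 * a) := by
      have : ∀ i : Fin a, sInc a lam i + 1 = lam i.rev + ((i : ℕ) + 2) := by
        intro i; rw [sInc_eq]; omega
      rw [Finset.sum_congr rfl fun i _ => this i, Finset.sum_add_distrib,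
        Finset.sum_add_distrib]
      have hrev : ∑ i : Fin a, lam i.rev = ∑ i, lam i :=
        Fintype.sum_equiv Fin.revPerm _ _ (fun i => by simp)
      simp [hrev, Finset.sum_const, Finset.card_univ, mul_comm]
    rw [hexp]
    have hcast : (((-1 : ℤˣ) ^ (a / 2) : ℤˣ) : ℂ) = (-1 : ℂ) ^ (a / 2) := by
      push_cast
      rfl
    rw [hcast, ← pow_add]
    have heven : Even ((∑ i : Fin a, (i : ℕ)) + 2 * a + a / 2) := by
      have := even_aux a
      rw [Nat.even_iff] at this ⊢
      omega
    rw [show (∑ i, lam i) + ((∑ i : Fin a, (i : ℕ)) + 2 * a) + a / 2 =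
        (∑ i, lam i) + ((∑ i : Fin a, (i : ℕ)) + 2 * a + a / 2) by ring,
      pow_add, heven.neg_one_pow, mul_one]
  · rw [if_neg hk]
    by_cases hrow : ∀ i : Fin a, ∃ j : Fin a, sInc a lam i + sInc a lam' j = 2 * a + 1
    · exfalso
      apply hk
      have hu : StrictMono (sInc a (seqKappa a a lam)) := sInc_strictMono (isRect_kappa h).1
      have ht : StrictMono (sInc a lam') := sInc_strictMono h'.1
      have hsub : Finset.univ.image (sInc a (seqKappa a a lam)) ⊆
          Finset.univ.image (sInc a lam') := by
        intro y hy
        rw [Finset.mem_image] at hy ⊢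
        obtain ⟨i, _, rfl⟩ := hy
        obtain ⟨j, hj⟩ := hrow i.rev
        have hadd := sInc_kappa_add lam h.2 i
        exact ⟨j, Finset.mem_univ j, by omega⟩
      have hcard : (Finset.univ.image (sInc a lam')).card ≤
          (Finset.univ.image (sInc a (seqKappa a a lam))).card := by
        rw [Finset.card_image_of_injective _ ht.injective,
          Finset.card_image_of_injective _ hu.injective]
      have himg := Finset.eq_of_subset_of_card_le hsub hcard
      have hrange : Set.range (sInc a lam') = Set.range (sInc a (seqKappa a a lam)) := by
        rw [← Set.image_univ, ← Set.image_univ, ← Finset.coe_univ, ← Finset.coe_image,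
          ← Finset.coe_image, himg]
      exact eq_of_sInc_eq ((StrictMono.range_inj ht hu).mp hrange)
    · push_neg at hrow
      obtain ⟨i, hi⟩ := hrow
      apply Matrix.det_eq_zero_of_row_eq_zero i
      intro j
      rw [Matrix.of_apply, Bform, if_neg (hi j)]
end

section
/- Let n = 2a with a ≥ 1, let M_B be the 2a×2a complex matrix with (M_B)_{m, 2a+1−m} = (−1)^{m+1} and all other entries 0, let K = i^{2a−1} · J (J the reversal permutation matrix, J_{m,2a+1−m} = 1), and let D = i^{1−2a} · diag(1, −1, …, (−1)^{2a−1}). There exists an invertible complex 2a×2a matrix M such that M K M⁻¹ = D and Mᵀ M_B M = M_B (i.e., the conjugating element can be chosen in the symplectic group of the form M_B, so that it commutes with the outer automorphism A ↦ M_B⁻¹ A⁻ᵀ M_B). -/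
/-- The `2a × 2a` reversal permutation matrix `J`, with `J_{m,k} = 1` iff `k = 2a+1-m`
(one-based), i.e. `m + k = 2a - 1` zero-based. -/
def revMatrix (n : ℕ) : Matrix (Fin n) (Fin n) ℂ :=
  Matrix.of fun m k => if (m : ℕ) + (k : ℕ) = n - 1 then 1 else 0

/-- The matrix `M_B` of the symplectic form: `(M_B)_{m,2a+1-m} = (-1)^{m+1}` (one-based),
all other entries `0`. -/
def symplMatrix (a : ℕ) : Matrix (Fin (2 * a)) (Fin (2 * a)) ℂ :=
  Matrix.of fun m k =>
    if (m : ℕ) + (k : ℕ) = 2 * a - 1 then (-1 : ℂ) ^ (m : ℕ) else 0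

namespace KSimAux

open Matrix (transpose)
local postfix:1024 "ᵀ" => Matrix.transpose

/-- the reversal on indices -/
def rv (a : ℕ) (j : Fin (2 * a)) : Fin (2 * a) :=
  ⟨2 * a - 1 - (j : ℕ), by have := j.isLt; omega⟩

lemma coe_rv (a : ℕ) (j : Fin (2 * a)) : ((rv a j : Fin (2 * a)) : ℕ) = 2 * a - 1 - (j : ℕ) := rfl

lemma rv_rv (a : ℕ) (j : Fin (2 * a)) : rv a (rv a j) = j := by
  have := j.isLt
  apply Fin.ext
  simp only [coe_rv]
  omega

/-- the reversal matrix, in selection form -/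
def Jm (a : ℕ) : Matrix (Fin (2 * a)) (Fin (2 * a)) ℂ :=
  Matrix.of fun i k => if k = rv a i then 1 else 0

lemma revMatrix_eq (a : ℕ) : revMatrix (2 * a) = Jm a := by
  ext i k
  have hi := i.isLt
  have hk := k.isLt
  simp only [revMatrix, Jm, Matrix.of_apply]
  congr 1
  simp only [eq_iff_iff]
  constructor
  · intro h; apply Fin.ext; simp only [coe_rv]; omega
  · intro h; subst h; simp only [coe_rv]; omega

lemma Jm_mul (a : ℕ) (B : Matrix (Fin (2 * a)) (Fin (2 * a)) ℂ) :
    Jm a * B = Matrix.of fun i j => B (rv a i) j := by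
  ext i j
  simp [Jm, Matrix.mul_apply]

lemma Jm_mul_diag (a : ℕ) (f : Fin (2 * a) → ℂ) :
    Jm a * Matrix.diagonal f = Matrix.diagonal (fun j => f (rv a j)) * Jm a := by
  rw [Jm_mul]
  ext i j
  rw [Matrix.of_apply, Matrix.diagonal_mul]
  by_cases h : j = rv a i
  · subst h
    simp [Jm, Matrix.diagonal_apply_eq]
  · have h' : rv a i ≠ j := fun hh => h hh.symm
    simp [Jm, Matrix.diagonal_apply_ne _ h', h]

lemma Jm_mul_Jm (a : ℕ) : Jm a * Jm a = 1 := by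
  rw [Jm_mul]
  ext i j
  simp only [Jm, Matrix.of_apply, rv_rv, Matrix.one_apply]
  by_cases h : i = j
  · simp [h]
  · rw [if_neg (fun hh => h hh.symm), if_neg h]

lemma Jm_transpose (a : ℕ) : (Jm a)ᵀ = Jm a := by
  ext i j
  simp only [Matrix.transpose_apply, Jm, Matrix.of_apply]
  congr 1
  simp only [eq_iff_iff]
  constructor
  · intro h; subst h; exact (rv_rv a _).symm
  · intro h; subst h; exact (rv_rv a _).symm

/-- diagonal scaling functions -/
noncomputable def Pf (a : ℕ) (j : Fin (2 * a)) : ℂ := if (j : ℕ) < a then 1 else 1 / 2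
noncomputable def df (a : ℕ) (j : Fin (2 * a)) : ℂ := (-1) ^ ((j : ℕ) + 1)
noncomputable def sf (a : ℕ) (j : Fin (2 * a)) : ℂ := (-1) ^ (j : ℕ)
noncomputable def Qf (a : ℕ) (j : Fin (2 * a)) : ℂ := df a j * Pf a j

lemma P_P (a : ℕ) (j : Fin (2 * a)) : Pf a j * Pf a (rv a j) = 1 / 2 := by
  have hj := j.isLt
  simp only [Pf, coe_rv]
  split_ifs with h1 h2 h3
  · exfalso; omega
  · norm_num; omega
  · norm_num; omega
  · exfalso; omega

lemma d_d (a : ℕ) (j : Fin (2 * a)) : df a j * df a (rv a j) = -1 := by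
  have hj := j.isLt
  simp only [df, coe_rv, ← pow_add]
  rw [show (j : ℕ) + 1 + (2 * a - 1 - (j : ℕ) + 1) = 2 * a + 1 from by omega]
  exact Odd.neg_one_pow ⟨a, by omega⟩

lemma d_sq (a : ℕ) (j : Fin (2 * a)) : df a j * df a j = 1 := by
  simp only [df, ← pow_add]
  exact Even.neg_one_pow ⟨(j : ℕ) + 1, by omega⟩

lemma s_s (a : ℕ) (j : Fin (2 * a)) : sf a j * sf a (rv a j) = -1 := by
  have hj := j.isLt
  simp only [sf, coe_rv, ← pow_add]
  rw [show (j : ℕ) + (2 * a - 1 - (j : ℕ)) = 2 * a - 1 from by omega]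
  exact Odd.neg_one_pow ⟨a - 1, by omega⟩

lemma s_rv (a : ℕ) (j : Fin (2 * a)) : sf a (rv a j) = -sf a j := by
  have h1 := s_s a j
  have h2 : sf a j * sf a j = 1 := by
    simp only [sf, ← pow_add]
    exact Even.neg_one_pow ⟨(j : ℕ), by omega⟩
  calc sf a (rv a j) = (sf a j * sf a j) * sf a (rv a j) := by rw [h2, one_mul]
    _ = sf a j * (sf a j * sf a (rv a j)) := by ring
    _ = -sf a j := by rw [h1]; ring

lemma diag_add (a : ℕ) (u v : Fin (2 * a) → ℂ) :
    (Matrix.diagonal (fun j => u j + v j) : Matrix (Fin (2 * a)) (Fin (2 * a)) ℂ)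
      = Matrix.diagonal u + Matrix.diagonal v := by
  ext i j
  by_cases h : i = j <;> simp [Matrix.diagonal_apply, h]

lemma diag_zero (a : ℕ) :
    (Matrix.diagonal (fun _ => (0 : ℂ)) : Matrix (Fin (2 * a)) (Fin (2 * a)) ℂ) = 0 := by
  ext i j
  by_cases h : i = j <;> simp [Matrix.diagonal_apply, h]

lemma diag_one (a : ℕ) :
    (Matrix.diagonal (fun _ => (1 : ℂ)) : Matrix (Fin (2 * a)) (Fin (2 * a)) ℂ) = 1 := by
  ext i j
  by_cases h : i = j <;> simp [Matrix.diagonal_apply, Matrix.one_apply, h]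

/-- the key expansion lemma for products of matrices of the form `diag f + diag g * J` -/
lemma gen_mul (a : ℕ) (f g f' g' : Fin (2 * a) → ℂ) :
    (Matrix.diagonal f + Matrix.diagonal g * Jm a)
      * (Matrix.diagonal f' + Matrix.diagonal g' * Jm a)
    = Matrix.diagonal (fun j => f j * f' j + g j * g' (rv a j))
      + Matrix.diagonal (fun j => f j * g' j + g j * f' (rv a j)) * Jm a := by
  have t2 : Matrix.diagonal f * (Matrix.diagonal g' * Jm a)
      = Matrix.diagonal (fun j => f j * g' j) * Jm a := by
    rw [← mul_assoc, Matrix.diagonal_mul_diagonal]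
  have t3 : (Matrix.diagonal g * Jm a) * Matrix.diagonal f'
      = Matrix.diagonal (fun j => g j * f' (rv a j)) * Jm a := by
    rw [mul_assoc, Jm_mul_diag, ← mul_assoc, Matrix.diagonal_mul_diagonal]
  have t4 : (Matrix.diagonal g * Jm a) * (Matrix.diagonal g' * Jm a)
      = Matrix.diagonal (fun j => g j * g' (rv a j)) := by
    rw [mul_assoc, ← mul_assoc (Jm a), Jm_mul_diag,
      mul_assoc (Matrix.diagonal fun j => g' (rv a j)), Jm_mul_Jm, mul_one,
      Matrix.diagonal_mul_diagonal]
  rw [add_mul, mul_add, mul_add, Matrix.diagonal_mul_diagonal, t2, t3, t4,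
    diag_add a (fun j => f j * f' j) (fun j => g j * g' (rv a j)),
    diag_add a (fun j => f j * g' j) (fun j => g j * f' (rv a j)), add_mul]
  abel

/-- the conjugating matrix -/
noncomputable def Mm (a : ℕ) : Matrix (Fin (2 * a)) (Fin (2 * a)) ℂ :=
  Matrix.diagonal (Pf a) + Matrix.diagonal (Qf a) * Jm a

/-- its inverse -/
noncomputable def Nm (a : ℕ) : Matrix (Fin (2 * a)) (Fin (2 * a)) ℂ :=
  Matrix.diagonal (fun j => Pf a (rv a j)) + Matrix.diagonal (fun j => -Qf a j) * Jm a

lemma form_eq_one (a : ℕ) (u v : Fin (2 * a) → ℂ) (hu : u = fun _ => 1) (hv : v = fun _ => 0) :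
    Matrix.diagonal u + Matrix.diagonal v * Jm a = 1 := by
  rw [hu, hv, diag_zero, zero_mul, add_zero, diag_one]

lemma M_mul_N (a : ℕ) : Mm a * Nm a = 1 := by
  rw [Mm, Nm, gen_mul]
  apply form_eq_one
  · funext j
    have h1 := P_P a j
    have h2 := d_d a j
    simp only [Qf]
    linear_combination (1 - df a j * df a (rv a j)) * h1 - (1 / 2 : ℂ) * h2
  · funext j
    simp only [rv_rv]
    ring

lemma N_mul_M (a : ℕ) : Nm a * Mm a = 1 := by
  rw [Mm, Nm, gen_mul]
  apply form_eq_one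
  · funext j
    have h1 := P_P a j
    have h2 := d_d a j
    simp only [Qf]
    linear_combination (1 - df a j * df a (rv a j)) * h1 - (1 / 2 : ℂ) * h2
  · funext j
    ring

lemma M_J (a : ℕ) : Mm a * Jm a = Matrix.diagonal (df a) * Mm a := by
  rw [Mm, add_mul, mul_assoc, Jm_mul_Jm, mul_one, mul_add, ← mul_assoc,
    Matrix.diagonal_mul_diagonal, Matrix.diagonal_mul_diagonal]
  have e1 : (fun i => df a i * Pf a i) = Qf a := rfl
  have e2 : (fun i => df a i * Qf a i) = Pf a := by
    funext j
    show df a j * (df a j * Pf a j) = Pf a j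
    rw [← mul_assoc, d_sq, one_mul]
  rw [e1, e2]
  exact add_comm _ _

lemma M_transpose (a : ℕ) :
    (Mm a)ᵀ = Matrix.diagonal (Pf a) + Matrix.diagonal (fun j => Qf a (rv a j)) * Jm a := by
  rw [Mm, Matrix.transpose_add, Matrix.diagonal_transpose, Matrix.transpose_mul,
    Jm_transpose, Matrix.diagonal_transpose, Jm_mul_diag]

lemma symplMatrix_eq (a : ℕ) : symplMatrix a = Matrix.diagonal (sf a) * Jm a := by
  ext i j
  have hi := i.isLt
  have hj := j.isLt
  rw [Matrix.diagonal_mul]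
  simp only [symplMatrix, Jm, sf, Matrix.of_apply]
  by_cases h : (i : ℕ) + (j : ℕ) = 2 * a - 1
  · have hj' : j = rv a i := by apply Fin.ext; rw [coe_rv]; omega
    rw [if_pos h, if_pos hj', mul_one]
  · have hj' : ¬ j = rv a i := fun hc => h (by subst hc; rw [coe_rv]; omega)
    rw [if_neg h, if_neg hj', mul_zero]

lemma sympl_eq (a : ℕ) : (Mm a)ᵀ * symplMatrix a * Mm a = symplMatrix a := by
  rw [symplMatrix_eq, M_transpose]
  conv_lhs =>
    rw [show Matrix.diagonal (sf a) * Jm a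
        = Matrix.diagonal (fun _ => (0 : ℂ)) + Matrix.diagonal (sf a) * Jm a from by
      rw [diag_zero, zero_add]]
  rw [Mm, gen_mul, gen_mul]
  have key : ∀ u v : Fin (2 * a) → ℂ, u = (fun _ => 0) → v = sf a →
      Matrix.diagonal u + Matrix.diagonal v * Jm a = Matrix.diagonal (sf a) * Jm a := by
    intro u v hu hv
    rw [hu, hv, diag_zero, zero_add]
  apply key
  · funext j
    have hs := s_rv a j
    simp only [Qf]
    rw [hs]
    ring
  · funext j
    have hs := s_rv a j
    have h1 := P_P a j
    have h2 := d_d a j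
    simp only [Qf]
    rw [hs]
    linear_combination (sf a j * (1 - df a j * df a (rv a j))) * h1 - (sf a j / 2) * h2

lemma I_zpow_eq (a : ℕ) (ha : 1 ≤ a) :
    Complex.I ^ ((1 : ℤ) - 2 * a) = -Complex.I ^ (2 * a - 1) := by
  have hx2 : (Complex.I ^ (2 * a - 1)) ^ 2 = -1 := by
    rw [← pow_mul, show (2 * a - 1) * 2 = 4 * (a - 1) + 2 from by omega, pow_add, pow_mul]
    rw [show Complex.I ^ 4 = 1 from by
      rw [show (4 : ℕ) = 2 * 2 from rfl, pow_mul, Complex.I_sq]; norm_num]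
    rw [one_pow, Complex.I_sq, one_mul]
  have hzint : (1 : ℤ) - 2 * a = -((2 * a - 1 : ℕ) : ℤ) := by
    push_cast [Nat.cast_sub (show 1 ≤ 2 * a by omega)]
    ring
  rw [hzint, zpow_neg, zpow_natCast]
  apply inv_eq_of_mul_eq_one_right
  rw [mul_neg, ← sq, hx2, neg_neg]

lemma final_scalar (a : ℕ) (ha : 1 ≤ a) :
    Complex.I ^ (2 * a - 1) • Matrix.diagonal (df a)
      = Complex.I ^ ((1 : ℤ) - 2 * a)
        • Matrix.diagonal (fun k : Fin (2 * a) => (-1 : ℂ) ^ (k : ℕ)) := by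
  have hds : Matrix.diagonal (df a)
      = -Matrix.diagonal (fun k : Fin (2 * a) => (-1 : ℂ) ^ (k : ℕ)) := by
    ext i j
    by_cases h : i = j
    · subst h
      simp [Matrix.diagonal_apply_eq, Matrix.neg_apply, df, pow_succ]
    · simp [Matrix.diagonal_apply_ne _ h, Matrix.neg_apply]
  rw [hds, I_zpow_eq a ha, neg_smul, smul_neg]

end KSimAux

/-- For `n = 2a`, `a ≥ 1`, the matrices `K = i^{2a-1} J` and
`D = i^{1-2a} diag(1, -1, …, (-1)^{2a-1})` are conjugate by an invertible matrix `M`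
which moreover lies in the symplectic group of the form `M_B` (`Mᵀ M_B M = M_B`),
so that conjugation by `M` commutes with the outer automorphism `A ↦ M_B⁻¹ A⁻ᵀ M_B`. -/
theorem K_similar_D_symplectically (a : ℕ) (ha : 1 ≤ a) :
    ∃ M : Matrix (Fin (2 * a)) (Fin (2 * a)) ℂ, IsUnit M ∧
      M * (Complex.I ^ (2 * a - 1) • revMatrix (2 * a)) * M⁻¹ =
        Complex.I ^ ((1 : ℤ) - 2 * a) •
          Matrix.diagonal (fun k : Fin (2 * a) => (-1 : ℂ) ^ (k : ℕ)) ∧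
      M.transpose * symplMatrix a * M = symplMatrix a := by
  refine ⟨KSimAux.Mm a, ⟨⟨KSimAux.Mm a, KSimAux.Nm a, KSimAux.M_mul_N a, KSimAux.N_mul_M a⟩, rfl⟩,
    ?_, KSimAux.sympl_eq a⟩
  rw [KSimAux.revMatrix_eq, Matrix.inv_eq_right_inv (KSimAux.M_mul_N a), mul_smul_comm,
    smul_mul_assoc, KSimAux.M_J, mul_assoc, KSimAux.M_mul_N, mul_one]
  exact KSimAux.final_scalar a ha
end

section
/- Let G = (ℤ/2) × (ℤ/2) be the Klein four-group. Let X be the G-set which is the disjoint union of G (with left translation action) and two one-point G-sets, and let Y be the G-set which is the disjoint union of the three coset spaces G/H₁, G/H₂, G/H₃ (with translation action), where H₁, H₂, H₃ are the three subgroups of G of order 2. Then the permutation representations of G on the free ℂ-vector spaces ℂ[X] and ℂ[Y] are isomorphic as representations of G, but X and Y are not isomorphic as G-sets (there is no G-equivariant bijection X → Y). -/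
/-- The Klein four-group. -/
abbrev K4 : Type := ZMod 2 × ZMod 2

/-- The three subgroups of order 2 of the Klein four-group. -/
def K4.H1 : AddSubgroup K4 := AddSubgroup.zmultiples (1, 0)
def K4.H2 : AddSubgroup K4 := AddSubgroup.zmultiples (0, 1)
def K4.H3 : AddSubgroup K4 := AddSubgroup.zmultiples (1, 1)

/-- The `G`-set `X`: the disjoint union of `G` itself (with translation action)
and two one-point `G`-sets. -/
def Xset : Type := K4 ⊕ (Unit ⊕ Unit)

/-- The action of `G` on `X`. -/
def actX (g : K4) : Xset → Xset := Sum.map (fun h => g + h) id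

/-- The `G`-set `Y`: the disjoint union of the three coset spaces
`G/H₁`, `G/H₂`, `G/H₃` with the translation action. -/
def Yset : Type := (K4 ⧸ K4.H1) ⊕ ((K4 ⧸ K4.H2) ⊕ (K4 ⧸ K4.H3))

/-- The action of `G` on `Y`. -/
def actY (g : K4) : Yset → Yset :=
  Sum.map (fun y => g +ᵥ y) (Sum.map (fun y => g +ᵥ y) (fun y => g +ᵥ y))

/- ### Auxiliary material -/

lemma memMul (a : K4) (haa : a + a = 0) :
    ∀ x ∈ AddSubgroup.zmultiples a, x = 0 ∨ x = a := by
  rintro x ⟨n, rfl⟩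
  show n • a = 0 ∨ n • a = a
  induction n using Int.induction_on with
  | zero => left; simp
  | succ k ih =>
      rcases ih with h | h
      · right; rw [add_zsmul, h, one_zsmul, zero_add]
      · left; rw [add_zsmul, h, one_zsmul, haa]
  | pred k ih =>
      rcases ih with h | h
      · right; rw [sub_zsmul, h, one_zsmul]
        rw [zero_add, neg_eq_of_add_eq_zero_left haa]
      · left; rw [sub_zsmul, h, one_zsmul]; abel

lemma memH1 : ∀ x ∈ K4.H1, x = 0 ∨ x = (1,0) := memMul (1,0) (by decide)
lemma memH2 : ∀ x ∈ K4.H2, x = 0 ∨ x = (0,1) := memMul (0,1) (by decide)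
lemma memH3 : ∀ x ∈ K4.H3, x = 0 ∨ x = (1,1) := memMul (1,1) (by decide)

lemma lift_ok (f : K4 → ℂ) (a : K4) (haa : a + a = 0)
    (hmem : ∀ x ∈ AddSubgroup.zmultiples a, x = 0 ∨ x = a) :
    ∀ h1 h2, (QuotientAddGroup.leftRel (AddSubgroup.zmultiples a)) h1 h2 →
      (fun h => f h + f (h + a)) h1 = (fun h => f h + f (h + a)) h2 := by
  intro h1 h2 hrel
  have key : h2 = h1 + (-h1 + h2) := by abel
  rcases hmem _ ((QuotientAddGroup.leftRel_apply).1 hrel) with h | h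
  · rw [h] at key; simp at key; rw [key]
  · rw [h] at key; rw [key]
    show f h1 + f (h1 + a) = f (h1 + a) + f (h1 + a + a)
    rw [add_assoc, haa, add_zero]; ring

/-- The characters of `K4` nontrivial on `H1`, `H2`, `H3` resp.
`chi1` is trivial on `H1`, etc. -/
noncomputable def chi1 : K4 → ℂ := fun h => if h.2 = 0 then 1 else -1
noncomputable def chi2 : K4 → ℂ := fun h => if h.1 = 0 then 1 else -1
noncomputable def chi3 : K4 → ℂ := fun h => if h.1 = h.2 then 1 else -1

/-- The forward linear map `ℂ[X] → ℂ[Y]`. -/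
noncomputable def phi (f : Xset → ℂ) : Yset → ℂ :=
  Sum.elim
    (fun c => Quotient.liftOn' c (fun h => f (.inl h) + f (.inl (h + (1,0))))
      (lift_ok (fun h => f (.inl h)) (1,0) (by decide) memH1))
    (Sum.elim
      (fun c => (Quotient.liftOn' c (fun h => f (.inl h) + f (.inl (h + (0,1))))
        (lift_ok (fun h => f (.inl h)) (0,1) (by decide) memH2)) + f (.inr (.inl ())))
      (fun c => (Quotient.liftOn' c (fun h => f (.inl h) + f (.inl (h + (1,1))))
        (lift_ok (fun h => f (.inl h)) (1,1) (by decide) memH3)) + f (.inr (.inr ()))))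

/-- The inverse linear map `ℂ[Y] → ℂ[X]`. -/
noncomputable def psi (p : Yset → ℂ) : Xset → ℂ :=
  let U0 := p (.inl (QuotientAddGroup.mk (0,0)))
  let U1 := p (.inl (QuotientAddGroup.mk (0,1)))
  let V0 := p (.inr (.inl (QuotientAddGroup.mk (0,0))))
  let V1 := p (.inr (.inl (QuotientAddGroup.mk (1,0))))
  let W0 := p (.inr (.inr (QuotientAddGroup.mk (0,0))))
  let W1 := p (.inr (.inr (QuotientAddGroup.mk (1,0))))
  Sum.elim
    (fun h => (U0 + U1 + chi1 h * (U0 - U1) + chi2 h * (V0 - V1)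
      + chi3 h * (W0 - W1)) / 4)
    (Sum.elim
      (fun _ => (V0 + V1 - (U0 + U1)) / 2)
      (fun _ => (W0 + W1 - (U0 + U1)) / 2))

-- coset equalities
lemma q1a : (QuotientAddGroup.mk (1,0) : K4 ⧸ K4.H1) = QuotientAddGroup.mk (0,0) :=
  QuotientAddGroup.eq.2 ⟨1, by decide⟩
lemma q1b : (QuotientAddGroup.mk (1,1) : K4 ⧸ K4.H1) = QuotientAddGroup.mk (0,1) :=
  QuotientAddGroup.eq.2 ⟨1, by decide⟩
lemma q2a : (QuotientAddGroup.mk (0,1) : K4 ⧸ K4.H2) = QuotientAddGroup.mk (0,0) :=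
  QuotientAddGroup.eq.2 ⟨1, by decide⟩
lemma q2b : (QuotientAddGroup.mk (1,1) : K4 ⧸ K4.H2) = QuotientAddGroup.mk (1,0) :=
  QuotientAddGroup.eq.2 ⟨1, by decide⟩
lemma q3a : (QuotientAddGroup.mk (1,1) : K4 ⧸ K4.H3) = QuotientAddGroup.mk (0,0) :=
  QuotientAddGroup.eq.2 ⟨1, by decide⟩
lemma q3b : (QuotientAddGroup.mk (0,1) : K4 ⧸ K4.H3) = QuotientAddGroup.mk (1,0) :=
  QuotientAddGroup.eq.2 ⟨1, by decide⟩

-- evaluation lemmas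
lemma phi_eval1 (f : Xset → ℂ) (h : K4) :
    phi f (Sum.inl (QuotientAddGroup.mk h)) = f (.inl h) + f (.inl (h + (1,0))) := rfl
lemma phi_eval2 (f : Xset → ℂ) (h : K4) :
    phi f (Sum.inr (Sum.inl (QuotientAddGroup.mk h)))
      = f (.inl h) + f (.inl (h + (0,1))) + f (.inr (.inl ())) := rfl
lemma phi_eval3 (f : Xset → ℂ) (h : K4) :
    phi f (Sum.inr (Sum.inr (QuotientAddGroup.mk h)))
      = f (.inl h) + f (.inl (h + (1,1))) + f (.inr (.inr ())) := rfl
lemma psi_eval1 (p : Yset → ℂ) (h : K4) :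
    psi p (Sum.inl h) =
      (p (.inl (QuotientAddGroup.mk (0,0))) + p (.inl (QuotientAddGroup.mk (0,1)))
        + chi1 h * (p (.inl (QuotientAddGroup.mk (0,0))) - p (.inl (QuotientAddGroup.mk (0,1))))
        + chi2 h * (p (.inr (.inl (QuotientAddGroup.mk (0,0)))) - p (.inr (.inl (QuotientAddGroup.mk (1,0)))))
        + chi3 h * (p (.inr (.inr (QuotientAddGroup.mk (0,0)))) - p (.inr (.inr (QuotientAddGroup.mk (1,0)))))) / 4 := rfl
lemma psi_eval2 (p : Yset → ℂ) (u : Unit) :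
    psi p (Sum.inr (Sum.inl u)) =
      (p (.inr (.inl (QuotientAddGroup.mk (0,0)))) + p (.inr (.inl (QuotientAddGroup.mk (1,0))))
        - (p (.inl (QuotientAddGroup.mk (0,0))) + p (.inl (QuotientAddGroup.mk (0,1))))) / 2 := rfl
lemma psi_eval3 (p : Yset → ℂ) (u : Unit) :
    psi p (Sum.inr (Sum.inr u)) =
      (p (.inr (.inr (QuotientAddGroup.mk (0,0)))) + p (.inr (.inr (QuotientAddGroup.mk (1,0))))
        - (p (.inl (QuotientAddGroup.mk (0,0))) + p (.inl (QuotientAddGroup.mk (0,1))))) / 2 := rfl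
lemma actX_inl (g h : K4) : actX g (Sum.inl h) = Sum.inl (g + h) := rfl
lemma actX_inr (g : K4) (z : Unit ⊕ Unit) : actX g (Sum.inr z) = Sum.inr z := rfl
lemma actY_eval1 (g h : K4) :
    actY g (Sum.inl (QuotientAddGroup.mk h)) = Sum.inl (QuotientAddGroup.mk (g + h)) := rfl
lemma actY_eval2 (g h : K4) :
    actY g (Sum.inr (Sum.inl (QuotientAddGroup.mk h)))
      = Sum.inr (Sum.inl (QuotientAddGroup.mk (g + h))) := rfl
lemma actY_eval3 (g h : K4) :
    actY g (Sum.inr (Sum.inr (QuotientAddGroup.mk h)))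
      = Sum.inr (Sum.inr (QuotientAddGroup.mk (g + h))) := rfl

set_option maxHeartbeats 1000000 in
lemma phi_add (f g : Xset → ℂ) : phi (f + g) = phi f + phi g := by
  funext y
  rcases y with c | (c|c) <;>
    induction c using QuotientAddGroup.induction_on <;>
    simp only [Pi.add_def, phi_eval1, phi_eval2, phi_eval3] <;> ring

set_option maxHeartbeats 1000000 in
lemma phi_smul (a : ℂ) (f : Xset → ℂ) : phi (a • f) = a • phi f := by
  funext y
  rcases y with c | (c|c) <;>
    induction c using QuotientAddGroup.induction_on <;>
    simp only [Pi.smul_def, smul_eq_mul, phi_eval1, phi_eval2, phi_eval3] <;> ring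

lemma hK : ∀ h : K4, h = (0,0) ∨ h = (0,1) ∨ h = (1,0) ∨ h = (1,1) := by decide

set_option maxHeartbeats 1000000 in
lemma phi_left_inv : Function.LeftInverse psi phi := by
  intro f
  funext x
  rcases x with h | (u|u)
  · rcases hK h with rfl | rfl | rfl | rfl <;>
    · rw [psi_eval1, phi_eval1, phi_eval1, phi_eval2, phi_eval2, phi_eval3, phi_eval3]
      simp only [show ((0,0):K4)+(1,0) = (1,0) from by decide,
        show ((0,0):K4)+(0,1) = (0,1) from by decide,
        show ((0,0):K4)+(1,1) = (1,1) from by decide,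
        show ((0,1):K4)+(1,0) = (1,1) from by decide,
        show ((0,1):K4)+(0,1) = (0,0) from by decide,
        show ((0,1):K4)+(1,1) = (1,0) from by decide,
        show ((1,0):K4)+(1,0) = (0,0) from by decide,
        show ((1,0):K4)+(0,1) = (1,1) from by decide,
        show ((1,0):K4)+(1,1) = (0,1) from by decide,
        show ((1,1):K4)+(1,0) = (0,1) from by decide,
        show ((1,1):K4)+(0,1) = (1,0) from by decide,
        show ((1,1):K4)+(1,1) = (0,0) from by decide]
      norm_num [chi1, chi2, chi3]
      ring
  · rw [psi_eval2, phi_eval1, phi_eval1, phi_eval2, phi_eval2]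
    simp only [show ((0,0):K4)+(1,0) = (1,0) from by decide,
        show ((0,0):K4)+(0,1) = (0,1) from by decide,
        show ((0,0):K4)+(1,1) = (1,1) from by decide,
        show ((0,1):K4)+(1,0) = (1,1) from by decide,
        show ((0,1):K4)+(0,1) = (0,0) from by decide,
        show ((0,1):K4)+(1,1) = (1,0) from by decide,
        show ((1,0):K4)+(1,0) = (0,0) from by decide,
        show ((1,0):K4)+(0,1) = (1,1) from by decide,
        show ((1,0):K4)+(1,1) = (0,1) from by decide,
        show ((1,1):K4)+(1,0) = (0,1) from by decide,
        show ((1,1):K4)+(0,1) = (1,0) from by decide,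
        show ((1,1):K4)+(1,1) = (0,0) from by decide]
    ring
  · rw [psi_eval3, phi_eval1, phi_eval1, phi_eval3, phi_eval3]
    simp only [show ((0,0):K4)+(1,0) = (1,0) from by decide,
        show ((0,0):K4)+(0,1) = (0,1) from by decide,
        show ((0,0):K4)+(1,1) = (1,1) from by decide,
        show ((0,1):K4)+(1,0) = (1,1) from by decide,
        show ((0,1):K4)+(0,1) = (0,0) from by decide,
        show ((0,1):K4)+(1,1) = (1,0) from by decide,
        show ((1,0):K4)+(1,0) = (0,0) from by decide,
        show ((1,0):K4)+(0,1) = (1,1) from by decide,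
        show ((1,0):K4)+(1,1) = (0,1) from by decide,
        show ((1,1):K4)+(1,0) = (0,1) from by decide,
        show ((1,1):K4)+(0,1) = (1,0) from by decide,
        show ((1,1):K4)+(1,1) = (0,0) from by decide]
    ring

set_option maxHeartbeats 1000000 in
lemma phi_right_inv : Function.RightInverse psi phi := by
  intro p
  funext y
  rcases y with c | (c|c) <;>
    induction c using QuotientAddGroup.induction_on with
  | H h =>
    rcases hK h with rfl | rfl | rfl | rfl <;>
    · try simp only [q1a, q1b, q2a, q2b, q3a, q3b]
      first
        | rw [phi_eval1] | rw [phi_eval2] | rw [phi_eval3]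
      simp only [psi_eval1, psi_eval2, psi_eval3]
      simp only [show ((0,0):K4)+(1,0) = (1,0) from by decide,
        show ((0,0):K4)+(0,1) = (0,1) from by decide,
        show ((0,0):K4)+(1,1) = (1,1) from by decide,
        show ((0,1):K4)+(1,0) = (1,1) from by decide,
        show ((0,1):K4)+(0,1) = (0,0) from by decide,
        show ((0,1):K4)+(1,1) = (1,0) from by decide,
        show ((1,0):K4)+(1,0) = (0,0) from by decide,
        show ((1,0):K4)+(0,1) = (1,1) from by decide,
        show ((1,0):K4)+(1,1) = (0,1) from by decide,
        show ((1,1):K4)+(1,0) = (0,1) from by decide,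
        show ((1,1):K4)+(0,1) = (1,0) from by decide,
        show ((1,1):K4)+(1,1) = (0,0) from by decide]
      norm_num [chi1, chi2, chi3]
      ring

set_option maxHeartbeats 1000000 in
lemma phi_equivariant (g : K4) (f : Xset → ℂ) :
    phi (fun x => f (actX g x)) = fun y => phi f (actY g y) := by
  funext y
  rcases y with c | (c|c) <;>
    induction c using QuotientAddGroup.induction_on with
  | H h =>
    first
    | rw [actY_eval1, phi_eval1, phi_eval1]; simp only [actX_inl, actX_inr, add_assoc]
    | rw [actY_eval2, phi_eval2, phi_eval2]; simp only [actX_inl, actX_inr, add_assoc]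
    | rw [actY_eval3, phi_eval3, phi_eval3]; simp only [actX_inl, actX_inr, add_assoc]

/-- The equivariant linear equivalence. -/
noncomputable def Phi : (Xset → ℂ) ≃ₗ[ℂ] (Yset → ℂ) where
  toFun := phi
  invFun := psi
  map_add' := phi_add
  map_smul' := phi_smul
  left_inv := phi_left_inv
  right_inv := phi_right_inv

/-- The permutation representations `ℂ[X]` and `ℂ[Y]` of the Klein four-group are
isomorphic as linear representations (there is a `G`-equivariant linear equivalence
of the function spaces), but `X` and `Y` are not isomorphic as `G`-sets. -/
theorem klein_permutation_reps_iso_but_sets_not :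
    (∃ φ : (Xset → ℂ) ≃ₗ[ℂ] (Yset → ℂ),
      ∀ (g : K4) (f : Xset → ℂ),
        φ (fun x => f (actX g x)) = fun y => φ f (actY g y)) ∧
    ¬∃ e : Xset ≃ Yset, ∀ (g : K4) (x : Xset), e (actX g x) = actY g (e x) := by
  constructor
  · exact ⟨Phi, phi_equivariant⟩
  · rintro ⟨e, he⟩
    have h0 : ∀ g : K4, actY g (e (Sum.inr (Sum.inl ()))) = e (Sum.inr (Sum.inl ())) :=
      fun g => (he g (Sum.inr (Sum.inl ()))).symm
    rcases hy : e (Sum.inr (Sum.inl ())) with c | (c|c) <;>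
      induction c using QuotientAddGroup.induction_on with
    | H h =>
      first
      | have h1 := h0 (0,1)
        rw [hy, actY_eval1] at h1
        have h2 : ((((0,1):K4) + h : K4) : K4 ⧸ K4.H1) = ((h : K4) : K4 ⧸ K4.H1) :=
          Sum.inl_injective h1
        have h3 := QuotientAddGroup.eq.1 h2
        have h4 : -(((0,1):K4) + h) + h = -((0,1):K4) := by abel
        rw [h4, show -((0,1):K4) = (0,1) from by decide] at h3
        rcases memH1 _ h3 with h5 | h5 <;> exact absurd h5 (by decide)
      | have h1 := h0 (1,0)
        rw [hy, actY_eval2] at h1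
        have h2 : ((((1,0):K4) + h : K4) : K4 ⧸ K4.H2) = ((h : K4) : K4 ⧸ K4.H2) :=
          Sum.inl_injective (Sum.inr_injective h1)
        have h3 := QuotientAddGroup.eq.1 h2
        have h4 : -(((1,0):K4) + h) + h = -((1,0):K4) := by abel
        rw [h4, show -((1,0):K4) = (1,0) from by decide] at h3
        rcases memH2 _ h3 with h5 | h5 <;> exact absurd h5 (by decide)
      | have h1 := h0 (1,0)
        rw [hy, actY_eval3] at h1
        have h2 : ((((1,0):K4) + h : K4) : K4 ⧸ K4.H3) = ((h : K4) : K4 ⧸ K4.H3) :=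
          Sum.inr_injective (Sum.inr_injective h1)
        have h3 := QuotientAddGroup.eq.1 h2
        have h4 : -(((1,0):K4) + h) + h = -((1,0):K4) := by abel
        rw [h4, show -((1,0):K4) = (1,0) from by decide] at h3
        rcases memH3 _ h3 with h5 | h5 <;> exact absurd h5 (by decide)
end
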